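/- Let N_X, N_Y, N_Z be K-order networks, let C_1 be a correspondence between X and Z, let C_2 be a correspondence between Z and Y, and let C = { (x,y) : there exists z ∈ Z with (x,z) ∈ C_1 and (z,y) ∈ C_2 } be the composite correspondence. Then for every integer 0 ≤ k ≤ K the k-order network differences satisfy Γ^k_{X,Y}(C) ≤ Γ^k_{X,Z}(C_1) + Γ^k_{Z,Y}(C_2). -/

import Mathlib

open scoped ENNReal

/-- A correspondence between node sets `X` and `Y`: a set of pairs in which every
`x : X` and every `y : Y` appears. -/
def IsCorrespondence {X Y : Type} (C : Set (X × Y)) : Prop :=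
  (∀ x : X, ∃ y : Y, (x, y) ∈ C) ∧ (∀ y : Y, ∃ x : X, (x, y) ∈ C)

/-- The rank of a tuple: the number of distinct elements appearing in it. -/
noncomputable def tupleRank {X : Type} {n : ℕ} (t : Fin n → X) : ℕ :=
  Set.ncard (Set.range t)

/-- A `K`-order network on a finite nonempty node set `X`: relationship functions
`r k : X^{k+1} → [0,1]` for `0 ≤ k ≤ K`, symmetric under permutations of the arguments,
and such that any subtuple with the same set of distinct elements as the full tuple
carries the same relationship value. -/
structure HONetwork (K : ℕ) (X : Type) [Fintype X] [Nonempty X] : Type where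
  r : ∀ k : ℕ, (Fin (k + 1) → X) → ℝ
  r_nonneg : ∀ k, k ≤ K → ∀ t : Fin (k + 1) → X, 0 ≤ r k t
  r_le_one : ∀ k, k ≤ K → ∀ t : Fin (k + 1) → X, r k t ≤ 1
  symm : ∀ k, k ≤ K → ∀ (t : Fin (k + 1) → X) (σ : Equiv.Perm (Fin (k + 1))),
    r k (t ∘ σ) = r k t
  identity : ∀ k, k ≤ K → ∀ k', k' ≤ K → ∀ (t : Fin (k + 1) → X)
    (ι : Fin (k' + 1) → Fin (k + 1)), StrictMono ι →
    Set.range (t ∘ ι) = Set.range t → r k' (t ∘ ι) = r k t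

/-- The `k`-order network difference `Γ^k_{X,Y}(C)`: the largest value of
`|r_X^k(x_{0:k}) − r_Y^k(y_{0:k})|` over tuples of pairs of correspondents in `C`. -/
noncomputable def Gamma {K : ℕ} {X Y : Type} [Fintype X] [Nonempty X] [Fintype Y] [Nonempty Y]
    (NX : HONetwork K X) (NY : HONetwork K Y) (k : ℕ) (C : Set (X × Y)) : ℝ :=
  sSup { v : ℝ | ∃ (tx : Fin (k + 1) → X) (ty : Fin (k + 1) → Y),
    (∀ i, (tx i, ty i) ∈ C) ∧ v = |NX.r k tx - NY.r k ty| }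

/-- The `k`-order network distance: minimum of `Γ^k_{X,Y}(C)` over correspondences `C`. -/
noncomputable def dN {K : ℕ} {X Y : Type} [Fintype X] [Nonempty X] [Fintype Y] [Nonempty Y]
    (k : ℕ) (NX : HONetwork K X) (NY : HONetwork K Y) : ℝ :=
  sInf { v : ℝ | ∃ C : Set (X × Y), IsCorrespondence C ∧ v = Gamma NX NY k C }

/-- The `p`-norm of a vector in `ℝ^{K+1}`, `1 ≤ p ≤ ∞`. -/
noncomputable def pNorm (K : ℕ) (p : ℝ≥0∞) [Fact (1 ≤ p)] (v : Fin (K + 1) → ℝ) : ℝ :=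
  ‖(WithLp.equiv p (Fin (K + 1) → ℝ)).symm v‖

/-- The `p`-norm network distance: minimum over correspondences `C` of the `p`-norm of the
vector `(Γ^0_{X,Y}(C), …, Γ^K_{X,Y}(C))`. -/
noncomputable def dNp {K : ℕ} {X Y : Type} [Fintype X] [Nonempty X] [Fintype Y] [Nonempty Y]
    (p : ℝ≥0∞) [Fact (1 ≤ p)] (NX : HONetwork K X) (NY : HONetwork K Y) : ℝ :=
  sInf { v : ℝ | ∃ C : Set (X × Y), IsCorrespondence C ∧
    v = pNorm K p (fun k : Fin (K + 1) => Gamma NX NY (k : ℕ) C) }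

/-- Two `K`-order networks are `k`-isomorphic if a bijection of the node sets preserves the
`k`-order relationship functions. -/
def kIsomorphic {K : ℕ} {X Y : Type} [Fintype X] [Nonempty X] [Fintype Y] [Nonempty Y]
    (k : ℕ) (NX : HONetwork K X) (NY : HONetwork K Y) : Prop :=
  ∃ φ : X ≃ Y, ∀ t : Fin (k + 1) → X, NY.r k (fun i => φ (t i)) = NX.r k t

/-- Two `K`-order networks are isomorphic if a bijection of the node sets preserves the
`k`-order relationship functions for all `0 ≤ k ≤ K`. -/
def Isomorphic {K : ℕ} {X Y : Type} [Fintype X] [Nonempty X] [Fintype Y] [Nonempty Y]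
    (NX : HONetwork K X) (NY : HONetwork K Y) : Prop :=
  ∃ φ : X ≃ Y, ∀ k, k ≤ K → ∀ t : Fin (k + 1) → X, NY.r k (fun i => φ (t i)) = NX.r k t

/-- A `K`-order dissimilarity network: a `K`-order network whose relationship functions
decompose as `r^k = d^k + ε · rank`, with nonnegative dissimilarity functions `d^k`
satisfying the order increasing property, and `0 < ε ≤ 1 − (1/K) · max d^K`. -/
structure DissimNetwork (K : ℕ) (X : Type) [Fintype X] [Nonempty X]
    extends HONetwork K X where
  dfun : ∀ k : ℕ, (Fin (k + 1) → X) → ℝ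
  eps : ℝ
  dfun_nonneg : ∀ k, k ≤ K → ∀ t : Fin (k + 1) → X, 0 ≤ dfun k t
  decomp : ∀ k, k ≤ K → ∀ t : Fin (k + 1) → X,
    r k t = dfun k t + eps * (tupleRank t : ℝ)
  order_incr : ∀ k : ℕ, k + 1 ≤ K → ∀ t : Fin (k + 2) → X,
    dfun k (fun i : Fin (k + 1) => t i.castSucc) ≤ dfun (k + 1) t
  eps_pos : 0 < eps
  eps_le : ∀ t : Fin (K + 1) → X, eps ≤ 1 - (1 / (K : ℝ)) * dfun K t

/-- A `K`-order proximity network: a `K`-order network whose relationship functions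
decompose as `r^k = p^k − ε · rank`, with nonnegative proximity functions `p^k`
satisfying the order decreasing property, and `0 < ε ≤ (1/K) · min p^K`. -/
structure ProxNetwork (K : ℕ) (X : Type) [Fintype X] [Nonempty X]
    extends HONetwork K X where
  pfun : ∀ k : ℕ, (Fin (k + 1) → X) → ℝ
  eps : ℝ
  pfun_nonneg : ∀ k, k ≤ K → ∀ t : Fin (k + 1) → X, 0 ≤ pfun k t
  decomp : ∀ k, k ≤ K → ∀ t : Fin (k + 1) → X,
    r k t = pfun k t - eps * (tupleRank t : ℝ)
  order_decr : ∀ k : ℕ, k + 1 ≤ K → ∀ t : Fin (k + 2) → X,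
    pfun (k + 1) t ≤ pfun k (fun i : Fin (k + 1) => t i.castSucc)
  eps_pos : 0 < eps
  eps_le : ∀ t : Fin (K + 1) → X, eps ≤ (1 / (K : ℝ)) * pfun K t

section Gamma

variable {K : ℕ} {X Y : Type} [Fintype X] [Nonempty X] [Fintype Y] [Nonempty Y]
  (NX : HONetwork K X) (NY : HONetwork K Y)

theorem Gamma_nonneg (k : ℕ) (C : Set (X × Y)) : 0 ≤ Gamma NX NY k C :=
  Real.sSup_nonneg <| by
    rintro v ⟨tx, ty, -, rfl⟩
    exact abs_nonneg _

/-- The hypothesis `0 ≤ c` handles the case of no admissible tuples, where `sSup ∅ = 0`. -/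
theorem Gamma_le (k : ℕ) (C : Set (X × Y)) {c : ℝ} (hc : 0 ≤ c)
    (h : ∀ (tx : Fin (k + 1) → X) (ty : Fin (k + 1) → Y),
      (∀ i, (tx i, ty i) ∈ C) → |NX.r k tx - NY.r k ty| ≤ c) :
    Gamma NX NY k C ≤ c :=
  Real.sSup_le (by rintro v ⟨tx, ty, hC, rfl⟩; exact h tx ty hC) hc

theorem abs_r_sub_r_le_one {k : ℕ} (hk : k ≤ K) (tx : Fin (k + 1) → X) (ty : Fin (k + 1) → Y) :
    |NX.r k tx - NY.r k ty| ≤ 1 :=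
  abs_sub_le_of_nonneg_of_le (NX.r_nonneg k hk tx) (NX.r_le_one k hk tx)
    (NY.r_nonneg k hk ty) (NY.r_le_one k hk ty)

theorem abs_r_sub_r_le_Gamma {k : ℕ} (hk : k ≤ K) {C : Set (X × Y)}
    {tx : Fin (k + 1) → X} {ty : Fin (k + 1) → Y} (hC : ∀ i, (tx i, ty i) ∈ C) :
    |NX.r k tx - NY.r k ty| ≤ Gamma NX NY k C :=
  le_csSup ⟨1, by rintro v ⟨tx', ty', -, rfl⟩; exact abs_r_sub_r_le_one NX NY hk tx' ty'⟩
    ⟨tx, ty, hC, rfl⟩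

end Gamma

theorem Gamma_comp_le_general (K : ℕ)
    (X Y Z : Type) [Fintype X] [Nonempty X] [Fintype Y] [Nonempty Y] [Fintype Z] [Nonempty Z]
    (NX : HONetwork K X) (NY : HONetwork K Y) (NZ : HONetwork K Z)
    (C1 : Set (X × Z)) (C2 : Set (Z × Y))
    (k : ℕ) (hk : k ≤ K) :
    Gamma NX NY k { q : X × Y | ∃ z : Z, (q.1, z) ∈ C1 ∧ (z, q.2) ∈ C2 } ≤
      Gamma NX NZ k C1 + Gamma NZ NY k C2 := by
  refine Gamma_le NX NY k _ (add_nonneg (Gamma_nonneg ..) (Gamma_nonneg ..)) ?_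
  intro tx ty hC
  choose tz hC1 hC2 using hC
  calc |NX.r k tx - NY.r k ty|
      ≤ |NX.r k tx - NZ.r k tz| + |NZ.r k tz - NY.r k ty| := abs_sub_le _ _ _
    _ ≤ Gamma NX NZ k C1 + Gamma NZ NY k C2 :=
      add_le_add (abs_r_sub_r_le_Gamma NX NZ hk hC1) (abs_r_sub_r_le_Gamma NZ NY hk hC2)

/-- for the composite correspondence, the `k`-order network differences satisfy
`Γ^k_{X,Y}(C) ≤ Γ^k_{X,Z}(C₁) + Γ^k_{Z,Y}(C₂)` for every `0 ≤ k ≤ K`. -/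
theorem Gamma_comp_le (K : ℕ)
    (X Y Z : Type) [Fintype X] [Nonempty X] [Fintype Y] [Nonempty Y] [Fintype Z] [Nonempty Z]
    (NX : HONetwork K X) (NY : HONetwork K Y) (NZ : HONetwork K Z)
    (C1 : Set (X × Z)) (C2 : Set (Z × Y))
    (h1 : IsCorrespondence C1) (h2 : IsCorrespondence C2)
    (k : ℕ) (hk : k ≤ K) :
    Gamma NX NY k { q : X × Y | ∃ z : Z, (q.1, z) ∈ C1 ∧ (z, q.2) ∈ C2 } ≤
      Gamma NX NZ k C1 + Gamma NZ NY k C2 :=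
  Gamma_comp_le_general K X Y Z NX NY NZ C1 C2 k hk
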